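/- arXiv:1806.11442 — 11 statements merged into one kernel-verified Lean document; each statement's English description precedes it below -/
import Mathlib

section
/- For any two distinct nonzero zero-divisors x and y of a commutative ring R, there exists a path of length at most 2 between them in the extended zero-divisor graph; i.e., either x and y are adjacent, or there exists a nonzero zero-divisor z adjacent to both. -/
/-- x is a nonzero zero-divisor -/
def ZDStar {R : Type*} [CommRing R] (x : R) : Prop := x ≠ 0 ∧ ∃ y ≠ 0, x * y = 0

/-- adjacency in the extended zero-divisor graph Γ̃(R) -/
def EAdj {R : Type*} [CommRing R] (x y : R) : Prop :=
  x ≠ y ∧ (x * y = 0 ∨ ∃ z ≠ 0, (x + y) * z = 0)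

theorem stmt0 {R : Type*} [CommRing R] [Nontrivial R] (x y : R)
    (hx : ZDStar x) (hy : ZDStar y) (hxy : x ≠ y) :
    EAdj x y ∨ ∃ z : R, ZDStar z ∧ EAdj x z ∧ EAdj z y := by
  by_cases hadj : EAdj x y
  · exact Or.inl hadj
  right
  obtain ⟨hx0, a, ha0, hxa⟩ := hx
  obtain ⟨hy0, b, hb0, hyb⟩ := hy
  have hxy0 : x * y ≠ 0 := fun h => hadj ⟨hxy, Or.inl h⟩
  by_cases hab : a * b = 0
  · by_cases hax : a = x
    · -- then x * b = 0, use z = b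
      have hxb : x * b = 0 := by rw [← hax]; exact hab
      refine ⟨b, ⟨hb0, y, hy0, by rw [mul_comm]; exact hyb⟩,
        ⟨?_, Or.inl hxb⟩, ⟨?_, Or.inl (by rw [mul_comm]; exact hyb)⟩⟩
      · rintro rfl; exact hxy0 (by rw [mul_comm]; exact hyb)
      · rintro rfl; exact hxy0 hxb
    · -- use z = a
      have hay : a ≠ y := by rintro rfl; exact hxy0 hxa
      refine ⟨a, ⟨ha0, x, hx0, by rw [mul_comm]; exact hxa⟩,
        ⟨fun h => hax h.symm, Or.inl hxa⟩,
        ⟨hay, Or.inr ⟨b, hb0, ?_⟩⟩⟩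
      have : (a + y) * b = a * b + y * b := by ring
      rw [this, hab, hyb, add_zero]
  · -- use z = a * b
    have h1 : x * (a * b) = 0 := by
      calc x * (a * b) = x * a * b := by ring
      _ = 0 := by rw [hxa, zero_mul]
    have h2 : a * b * y = 0 := by
      calc a * b * y = a * (y * b) := by ring
      _ = 0 := by rw [hyb, mul_zero]
    refine ⟨a * b, ⟨hab, y, hy0, h2⟩, ⟨?_, Or.inl h1⟩, ⟨?_, Or.inl h2⟩⟩
    · rintro rfl
      exact hxy0 h2
    · intro h; rw [h] at h1; exact hxy0 h1
end

section
/- The extended zero-divisor graph Γ̃(R) of a commutative ring R is connected with diameter at most 2. -/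
/-- the extended zero-divisor graph Γ̃(R), on the nonzero zero-divisors of R -/
def extGraph (R : Type*) [CommRing R] :
    SimpleGraph {x : R // x ≠ 0 ∧ ∃ y ≠ 0, x * y = 0} where
  Adj a b := a ≠ b ∧ ((a : R) * b = 0 ∨ ∃ z ≠ 0, ((a : R) + b) * z = 0)
  symm := ⟨fun a b => by
    rintro ⟨hne, h | ⟨z, hz, h⟩⟩
    · exact ⟨hne.symm, Or.inl (by rw [mul_comm] at h; exact h)⟩
    · exact ⟨hne.symm, Or.inr ⟨z, hz, by rw [add_comm] at h; exact h⟩⟩⟩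
  loopless := ⟨fun a => by simp⟩

/-!
For distinct vertices `a, b` with `a * b ≠ 0`, the product `a * b` is again a vertex: it is killed
by the annihilators `x` of `a` and `y` of `b`. Two vertices with a common nonzero annihilator `z` are
equal or adjacent, since `(u + v) * z = 0`. So `a, a * b, b` is a walk of length at most 2, with
steps that may collapse when `a * b = a` or `a * b = b`.
-/

namespace extGraph

open SimpleGraph

variable {R : Type*} [CommRing R]

theorem edist_le_one_of_mul_eq_zero {a b : {x : R // x ≠ 0 ∧ ∃ y ≠ 0, x * y = 0}}
    (h : (a : R) * b = 0) : (extGraph R).edist a b ≤ 1 := by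
  rw [edist_le_one_iff_adj_or_eq]
  by_cases hab : a = b
  · exact Or.inr hab
  · exact Or.inl ⟨hab, Or.inl h⟩

theorem edist_le_one_of_mul_eq_zero_of_mul_eq_zero
    {a b : {x : R // x ≠ 0 ∧ ∃ y ≠ 0, x * y = 0}} {z : R} (hz : z ≠ 0)
    (ha : (a : R) * z = 0) (hb : (b : R) * z = 0) : (extGraph R).edist a b ≤ 1 := by
  rw [edist_le_one_iff_adj_or_eq]
  by_cases hab : a = b
  · exact Or.inr hab
  · exact Or.inl ⟨hab, Or.inr ⟨z, hz, by rw [add_mul, ha, hb, add_zero]⟩⟩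

theorem edist_le_two (a b : {x : R // x ≠ 0 ∧ ∃ y ≠ 0, x * y = 0}) :
    (extGraph R).edist a b ≤ 2 := by
  obtain ⟨-, x, hx, hax⟩ := a.2
  obtain ⟨-, y, hy, hby⟩ := b.2
  by_cases hab : (a : R) * b = 0
  · exact (edist_le_one_of_mul_eq_zero hab).trans (by norm_num)
  have habx : (a : R) * b * x = 0 := by rw [mul_right_comm, hax, zero_mul]
  have haby : (a : R) * b * y = 0 := by rw [mul_assoc, hby, mul_zero]
  let c : {x : R // x ≠ 0 ∧ ∃ y ≠ 0, x * y = 0} := ⟨a * b, hab, x, hx, habx⟩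
  calc (extGraph R).edist a b ≤ (extGraph R).edist a c + (extGraph R).edist c b :=
        SimpleGraph.edist_triangle
    _ ≤ 1 + 1 := add_le_add (edist_le_one_of_mul_eq_zero_of_mul_eq_zero hx hax habx)
        (edist_le_one_of_mul_eq_zero_of_mul_eq_zero hy haby hby)
    _ = 2 := by norm_num

end extGraph

theorem stmt1_general {R : Type*} [CommRing R]
    (hne : ∃ x : R, x ≠ 0 ∧ ∃ y ≠ 0, x * y = 0) :
    (extGraph R).Connected ∧ ∀ a b, (extGraph R).edist a b ≤ 2 := by
  obtain ⟨x, hx⟩ := hne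
  have : Nonempty {x : R // x ≠ 0 ∧ ∃ y ≠ 0, x * y = 0} := ⟨⟨x, hx⟩⟩
  refine ⟨⟨fun a b => SimpleGraph.reachable_of_edist_ne_top ?_⟩, extGraph.edist_le_two⟩
  exact ((extGraph.edist_le_two a b).trans_lt (by decide)).ne

theorem stmt1 {R : Type*} [CommRing R] [Nontrivial R]
    (hne : ∃ x : R, x ≠ 0 ∧ ∃ y ≠ 0, x * y = 0) :
    (extGraph R).Connected ∧ ∀ a b, (extGraph R).edist a b ≤ 2 :=
  stmt1_general hne
end

section
/- If a commutative ring R has at least 3 nonzero zero-divisors, then the extended zero-divisor graph Γ̃(R) contains a 3-cycle (triangle), i.e., its girth equals 3. -/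
/-!
Two kinds of triangles are easy to find: three distinct nonzero elements
with a common nonzero annihilator are pairwise adjacent (their sums are killed by it), and if
`x * w = 0` then `w`, `x`, `-x` form a triangle whenever these three are distinct (as `x + -x = 0`).
If neither occurs, every annihilator `ann z` with `z ≠ 0` is contained in `{0, u, -u}` for any
of its nonzero elements `u`. Either some product `x * w = 0` has `w ≠ ±x`; then `x`, `w` are
orthogonal idempotents with `x + w = 1` and `c = c * x + c * w` puts every nonzero zero-divisor
`c` in `{x, w}`. Or every nonzero zero-divisor squares to zero, and comparing `x * y` with the
annihilators of `x` and `y` gives `y = ±x`. In both cases there are at most two nonzero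
zero-divisors.
-/

open SimpleGraph

lemma SimpleGraph.girth_eq_three_of_adj {V : Type*} {G : SimpleGraph V} {a b c : V}
    (hab : G.Adj a b) (hbc : G.Adj b c) (hca : G.Adj c a) : G.girth = 3 := by
  classical
  have hK : completeGraph (Fin 3) ⊑ G := (not_cliqueFree_iff_top_isContained 3).1
    fun h => h {a, b, c} (is3Clique_triple_iff.2 ⟨hab, hca.symm, hbc⟩)
  have : G.egirth = 3 :=
    le_antisymm (hK.egirth_le.trans_eq (egirth_top (by simp))) three_le_egirth
  simp [girth, this]

section Triangles

variable {R : Type*} [CommRing R]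

lemma extGraph_girth_eq_three_of_common_annihilator {z u v : R} (hz : z ≠ 0) (hu : u ≠ 0)
    (huz : u * z = 0) (hvz : v * z = 0) (hv : v ≠ 0) (hvu : v ≠ u) (hvnu : v ≠ -u) :
    (extGraph R).girth = 3 := by
  have hsum : u + v ≠ 0 := fun h => hvnu (by linear_combination h)
  have hsumz : (u + v) * z = 0 := by linear_combination huz + hvz
  refine girth_eq_three_of_adj (a := ⟨u, hu, z, hz, huz⟩) (b := ⟨v, hv, z, hz, hvz⟩)
    (c := ⟨u + v, hsum, z, hz, hsumz⟩) ⟨?_, Or.inr ⟨z, hz, hsumz⟩⟩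
    ⟨?_, Or.inr ⟨z, hz, by linear_combination huz + 2 * hvz⟩⟩
    ⟨?_, Or.inr ⟨z, hz, by linear_combination 2 * huz + hvz⟩⟩
  · exact fun h => hvu (congrArg Subtype.val h).symm
  · exact fun h => hu (by linear_combination -congrArg Subtype.val h)
  · exact fun h => hv (by linear_combination congrArg Subtype.val h)

lemma extGraph_girth_eq_three_of_mul_eq_zero {x w : R} (hx : x ≠ 0) (hw : w ≠ 0)
    (hxw : x * w = 0) (hxnx : x ≠ -x) (hwx : w ≠ x) (hwnx : w ≠ -x) :
    (extGraph R).girth = 3 :=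
  girth_eq_three_of_adj (a := ⟨w, hw, x, hx, by linear_combination hxw⟩)
    (b := ⟨x, hx, w, hw, hxw⟩) (c := ⟨-x, neg_ne_zero.2 hx, w, hw, by linear_combination -hxw⟩)
    ⟨fun h => hwx (congrArg Subtype.val h), Or.inl (by linear_combination hxw)⟩
    ⟨fun h => hxnx (congrArg Subtype.val h), Or.inr ⟨w, hw, by ring⟩⟩
    ⟨fun h => hwnx (congrArg Subtype.val h).symm, Or.inl (by linear_combination -hxw)⟩

end Triangles

section TriangleFree

variable {R : Type*} [CommRing R]
  (hann : ∀ z u v : R, z ≠ 0 → u ≠ 0 → u * z = 0 → v * z = 0 → v = 0 ∨ v = u ∨ v = -u)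
include hann

lemma eq_or_eq_of_mul_eq_zero_of_ne_neg
    (hneg : ∀ x w : R, x ≠ 0 → w ≠ 0 → x * w = 0 → x = -x ∨ w = x ∨ w = -x)
    {x w : R} (hx : x ≠ 0) (hw : w ≠ 0) (hxw : x * w = 0) (hwx : w ≠ x) (hwnx : w ≠ -x)
    {c : R} (hc : c ≠ 0 ∧ ∃ v ≠ 0, c * v = 0) : c = x ∨ c = w := by
  have hwx' : w * x = 0 := by linear_combination hxw
  have hxnx : x = -x := (hneg x w hx hw hxw).resolve_right (not_or.2 ⟨hwx, hwnx⟩)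
  have hwnw : w = -w := (hneg w x hw hx hwx').resolve_right
    (not_or.2 ⟨hwx.symm, fun h => hwnx (by linear_combination h)⟩)
  have annw : ∀ v, v * w = 0 → v = 0 ∨ v = x := fun v hv => by
    rcases hann w x v hw hx hxw hv with h | h | h
    exacts [Or.inl h, Or.inr h, Or.inr (h.trans hxnx.symm)]
  have annx : ∀ v, v * x = 0 → v = 0 ∨ v = w := fun v hv => by
    rcases hann x w v hx hw hwx' hv with h | h | h
    exacts [Or.inl h, Or.inr h, Or.inr (h.trans hwnw.symm)]
  have hxx : x * x = x := (annw _ (by linear_combination x * hxw)).resolve_left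
    fun h => hwx ((annx x h).resolve_left hx).symm
  have hww : w * w = w := (annx _ (by linear_combination w * hwx')).resolve_left
    fun h => hwx ((annw w h).resolve_left hw)
  have hone : x + w = 1 := by
    by_contra hne
    have h0 : 1 - x - w ≠ 0 := fun h => hne (by linear_combination -h)
    have h1 := (annx _ (by linear_combination -hxx - hwx')).resolve_left h0
    have h2 := (annw _ (by linear_combination -hww - hxw)).resolve_left h0
    exact hwx (h1.symm.trans h2)
  obtain ⟨hc0, v, hv, hcv⟩ := hc
  rcases annw (c * x) (by linear_combination c * hxw) with hcx | hcx <;>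
    rcases annx (c * w) (by linear_combination c * hwx') with hcw | hcw
  · exact absurd (by linear_combination hcx + hcw - c * hone) hc0
  · exact Or.inr (by linear_combination hcx + hcw - c * hone)
  · exact Or.inl (by linear_combination hcx + hcw - c * hone)
  · have hc1 : c = 1 := by linear_combination hcx + hcw - c * hone + hone
    exact absurd (by linear_combination hcv - v * hc1) hv

lemma eq_or_eq_neg_of_forall_mul_eq_zero
    (hpm : ∀ x w : R, x ≠ 0 → w ≠ 0 → x * w = 0 → w = x ∨ w = -x)
    {x y : R} (hx : x ≠ 0 ∧ ∃ v ≠ 0, x * v = 0) (hy : y ≠ 0 ∧ ∃ v ≠ 0, y * v = 0) :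
    y = x ∨ y = -x := by
  have sq_eq_zero : ∀ a : R, (a ≠ 0 ∧ ∃ v ≠ 0, a * v = 0) → a * a = 0 := by
    rintro a ⟨ha, v, hv, hav⟩
    rcases hpm a v ha hv hav with rfl | rfl
    exacts [hav, by linear_combination -hav]
  rcases hann x x (x * y) hx.1 hx.1 (sq_eq_zero x hx) (by linear_combination y * sq_eq_zero x hx)
    with hxy | hxy | hxy
  · exact hpm x y hx.1 hy.1 hxy
  all_goals
    rcases hann y y (x * y) hy.1 hy.1 (sq_eq_zero y hy)
      (by linear_combination x * sq_eq_zero y hy) with hyx | hyx | hyx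
  · exact absurd (hxy.symm.trans hyx) hx.1
  · exact Or.inl (hyx.symm.trans hxy)
  · exact Or.inr (by linear_combination hyx - hxy)
  · exact absurd (by linear_combination hxy - hyx) hx.1
  · exact Or.inr (by linear_combination hxy - hyx)
  · exact Or.inl (by linear_combination hyx - hxy)

lemma exists_forall_zeroDivisor_eq_or_eq
    (hneg : ∀ x w : R, x ≠ 0 → w ≠ 0 → x * w = 0 → x = -x ∨ w = x ∨ w = -x) :
    ∃ p q : R, ∀ c : R, (c ≠ 0 ∧ ∃ v ≠ 0, c * v = 0) → c = p ∨ c = q := by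
  by_cases hpm : ∀ x w : R, x ≠ 0 → w ≠ 0 → x * w = 0 → w = x ∨ w = -x
  · by_cases hZ : ∃ x : R, x ≠ 0 ∧ ∃ v ≠ 0, x * v = 0
    · obtain ⟨x, hx⟩ := hZ
      exact ⟨x, -x, fun c hc => eq_or_eq_neg_of_forall_mul_eq_zero hann hpm hx hc⟩
    · exact ⟨0, 0, fun c hc => absurd ⟨c, hc⟩ hZ⟩
  · push Not at hpm
    obtain ⟨x, w, hx, hw, hxw, hwx, hwnx⟩ := hpm
    exact ⟨x, w, fun c hc => eq_or_eq_of_mul_eq_zero_of_ne_neg hann hneg hx hw hxw hwx hwnx hc⟩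

end TriangleFree

theorem stmt2_general {R : Type*} [CommRing R]
    (h3 : ∃ a b c : {x : R // x ≠ 0 ∧ ∃ y ≠ 0, x * y = 0},
      a ≠ b ∧ a ≠ c ∧ b ≠ c) :
    (extGraph R).girth = 3 := by
  by_contra hgirth
  have hann : ∀ z u v : R, z ≠ 0 → u ≠ 0 → u * z = 0 → v * z = 0 → v = 0 ∨ v = u ∨ v = -u := by
    intro z u v hz hu huz hvz
    by_contra! h
    exact hgirth (extGraph_girth_eq_three_of_common_annihilator hz hu huz hvz h.1 h.2.1 h.2.2)
  have hneg : ∀ x w : R, x ≠ 0 → w ≠ 0 → x * w = 0 → x = -x ∨ w = x ∨ w = -x := by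
    intro x w hx hw hxw
    by_contra! h
    exact hgirth (extGraph_girth_eq_three_of_mul_eq_zero hx hw hxw h.1 h.2.1 h.2.2)
  obtain ⟨p, q, hpq⟩ := exists_forall_zeroDivisor_eq_or_eq hann hneg
  obtain ⟨a, b, c, hab, hac, hbc⟩ := h3
  rcases hpq a a.2 with ha | ha <;> rcases hpq b b.2 with hb | hb <;>
    rcases hpq c c.2 with hc | hc <;> simp_all [Subtype.ext_iff]

theorem stmt2 {R : Type*} [CommRing R] [Nontrivial R]
    (h3 : ∃ a b c : {x : R // x ≠ 0 ∧ ∃ y ≠ 0, x * y = 0},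
      a ≠ b ∧ a ≠ c ∧ b ≠ c) :
    (extGraph R).girth = 3 :=
  stmt2_general h3
end

section
/- If R is a Boolean ring (every element is idempotent), then the extended zero-divisor graph Γ̃(R) is complete: for any distinct nonzero zero-divisors x, y, either xy = 0 or x + y ∈ Z(R). -/
theorem stmt5 {R : Type*} [CommRing R] [Nontrivial R] (hbool : ∀ x : R, x * x = x) :
    ∀ x y : R, ZDStar x → ZDStar y → x ≠ y →
      (x * y = 0 ∨ ∃ z ≠ 0, (x + y) * z = 0) := by
  intro x y _ _ _
  by_cases h : x * y = 0
  · exact Or.inl h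
  · refine Or.inr ⟨x * y, h, ?_⟩
    have h2 : (2 : R) = 0 := by linear_combination hbool 2
    linear_combination y * hbool x + x * hbool y + x * y * h2
end

section
/- A finite commutative ring R satisfies Γ̃(R) = Z*(Γ(R)) (i.e., for all distinct x, y ∈ Z(R)*, xy = 0 implies x + y ∈ Z(R)) if and only if Z(R) is an (additive) ideal of R. -/
section Monoid

variable {M : Type*} [Monoid M]

theorem pow_add_mul_eq_of_pow_add_eq {a : M} {m k : ℕ} (h : a ^ (m + k) = a ^ m) {s : ℕ}
    (hs : m ≤ s) (j : ℕ) : a ^ (s + k * j) = a ^ s := by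
  obtain ⟨t, rfl⟩ := exists_add_of_le hs
  have periodic : ∀ j, a ^ (m + k * j) = a ^ m := by
    intro j
    induction j with
    | zero => simp
    | succ j ih => rw [mul_add_one, ← add_assoc, pow_add, ih, ← pow_add, h]
  rw [add_right_comm, pow_add, periodic, ← pow_add]

theorem exists_isIdempotentElem_pow [Finite M] (a : M) :
    ∃ n ≠ 0, IsIdempotentElem (a ^ n) := by
  obtain ⟨m, n, hne, hmn⟩ := Finite.exists_ne_map_eq_of_infinite (a ^ · : ℕ → M)
  wlog hlt : m < n generalizing m n
  · exact this n m hne.symm hmn.symm (by omega)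
  obtain ⟨k, rfl⟩ := exists_add_of_le hlt.le
  have hk : 0 < k := by omega
  -- `k * (m + 1)` is a multiple of the period `k` lying past the preperiod `m`.
  refine ⟨k * (m + 1), by positivity, ?_⟩
  rw [IsIdempotentElem, ← pow_add]
  exact pow_add_mul_eq_of_pow_add_eq hmn.symm ((m.le_succ).trans (Nat.le_mul_of_pos_left _ hk)) _

end Monoid

theorem isNilpotent_or_isUnit_of_isIdempotentElem_eq_zero_or_one {M : Type*} [MonoidWithZero M]
    [Finite M] (h : ∀ e : M, IsIdempotentElem e → e = 0 ∨ e = 1) (a : M) :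
    IsNilpotent a ∨ IsUnit a := by
  obtain ⟨n, hn, he⟩ := exists_isIdempotentElem_pow a
  exact (h _ he).imp (⟨n, ·⟩) (IsUnit.of_pow_eq_one · hn)

theorem IsLocalRing.of_finite_of_isIdempotentElem_eq_zero_or_one {R : Type*} [Ring R]
    [Nontrivial R] [Finite R] (h : ∀ e : R, IsIdempotentElem e → e = 0 ∨ e = 1) :
    IsLocalRing R :=
  .of_isUnit_or_isUnit_one_sub_self fun a =>
    (isNilpotent_or_isUnit_of_isIdempotentElem_eq_zero_or_one h a).elim
      (Or.inr ·.isUnit_one_sub) Or.inl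

theorem mem_nonunits_iff_exists_mul_eq_zero_of_finite {R : Type*} [CommRing R] [Finite R]
    {x : R} : x ∈ nonunits R ↔ ∃ y ≠ 0, x * y = 0 := by
  rw [mem_nonunits_iff, isUnit_iff_mem_nonZeroDivisors_of_finite, mem_nonZeroDivisors_iff_left]
  simp only [not_forall, exists_prop, and_comm]

theorem eq_zero_or_one_of_isIdempotentElem {R : Type*} [CommRing R]
    (h : ∀ x y : R, ZDStar x → ZDStar y → x ≠ y → x * y = 0 → ∃ z ≠ 0, (x + y) * z = 0)
    {e : R} (he : IsIdempotentElem e) : e = 0 ∨ e = 1 := by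
  by_contra! hne
  obtain ⟨he0, he1⟩ := hne
  have hmul : e * (1 - e) = 0 := by rw [mul_sub, mul_one, he.eq, sub_self]
  have h1e : 1 - e ≠ 0 := sub_ne_zero.2 he1.symm
  have hdist : e ≠ 1 - e := fun hc => he0 <| by rw [← he.eq, ← hmul, ← hc]
  obtain ⟨z, hz, hz0⟩ := h e (1 - e) ⟨he0, _, h1e, hmul⟩
    ⟨h1e, _, he0, by rw [mul_comm, hmul]⟩ hdist hmul
  exact hz (by simpa using hz0)

theorem stmt7 {R : Type*} [CommRing R] [Nontrivial R] [Finite R] :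
    (∀ x y : R, ZDStar x → ZDStar y → x ≠ y → x * y = 0 →
        ∃ z ≠ 0, (x + y) * z = 0) ↔
    ∃ I : Ideal R, (I : Set R) = {x : R | ∃ y ≠ 0, x * y = 0} := by
  constructor
  · intro h
    have := IsLocalRing.of_finite_of_isIdempotentElem_eq_zero_or_one
      fun e => eq_zero_or_one_of_isIdempotentElem h
    refine ⟨IsLocalRing.maximalIdeal R, Set.ext fun x => ?_⟩
    exact (IsLocalRing.mem_maximalIdeal x).trans mem_nonunits_iff_exists_mul_eq_zero_of_finite
  · rintro ⟨I, hI⟩ x y hx hy - -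
    have hmem (w : R) : w ∈ I ↔ ∃ y ≠ 0, w * y = 0 := Set.ext_iff.1 hI w
    exact (hmem _).1 (I.add_mem ((hmem x).2 hx.2) ((hmem y).2 hy.2))
end

section
/- Let n be a composite integer greater than 1. The extended zero-divisor graph Γ̃(ℤ/nℤ) is complete if and only if n is a prime power or n is a product of two distinct primes. -/
lemma cast_mul_div_eq_zero {n p m : ℕ} (hpn : p ∣ n) (hpm : p ∣ m) :
    ((m : ZMod n)) * ((n / p : ℕ) : ZMod n) = 0 := by
  obtain ⟨c, rfl⟩ := hpm
  have h : p * c * (n / p) = c * n := by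
    rw [mul_comm p c, mul_assoc, Nat.mul_div_cancel' hpn]
  calc ((p * c : ℕ) : ZMod n) * ((n / p : ℕ) : ZMod n)
      = ((p * c * (n / p) : ℕ) : ZMod n) := by push_cast; ring
    _ = ((c * n : ℕ) : ZMod n) := by rw [h]
    _ = 0 := by push_cast [ZMod.natCast_self]; ring

lemma cast_div_ne_zero {n p : ℕ} (hn : 1 < n) (hp : 1 < p) (hpn : p ∣ n) :
    ((n / p : ℕ) : ZMod n) ≠ 0 := by
  have : NeZero n := ⟨by omega⟩
  rw [Ne, ZMod.natCast_eq_zero_iff]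
  intro h
  have h1 : 0 < n / p := Nat.div_pos (Nat.le_of_dvd (by omega) hpn) (by omega)
  have h2 : n / p < n := Nat.div_lt_self (by omega) hp
  exact absurd (Nat.le_of_dvd h1 h) (by omega)

lemma zd_cast {n p m : ℕ} (hn : 1 < n) (hp : p.Prime) (hpn : p ∣ n) (hpm : p ∣ m)
    (hm : (m : ZMod n) ≠ 0) : ZDStar (m : ZMod n) :=
  ⟨hm, _, cast_div_ne_zero hn hp.one_lt hpn, cast_mul_div_eq_zero hpn hpm⟩

lemma zd_neg {R : Type*} [CommRing R] {x : R} (h : ZDStar x) : ZDStar (-x) := by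
  obtain ⟨h0, z, hz, hxz⟩ := h
  exact ⟨neg_ne_zero.mpr h0, z, hz, by rw [neg_mul, hxz, neg_zero]⟩

lemma zd_not_unit {R : Type*} [CommRing R] {x : R} (h : ZDStar x) : ¬ IsUnit x := by
  obtain ⟨hx0, y, hy, hxy⟩ := h
  intro hu
  exact hy (hu.mul_right_eq_zero.mp hxy)

lemma not_complete {n p q d : ℕ} (hn : 1 < n) (hp : p.Prime) (hq : q.Prime)
    (hpn : p ∣ n) (hqn : q ∣ n) (hpd : p ∣ d) (hd1 : 1 ≤ d) (hqd : q ∣ d - 1)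
    (hnd : ¬ n ∣ d * (d - 1)) :
    ¬ ∀ x y : ZMod n, ZDStar x → ZDStar y → x ≠ y → EAdj x y := by
  have hNZ : NeZero n := ⟨by omega⟩
  intro hcompl
  set x : ZMod n := (d : ZMod n) with hxdef
  set y : ZMod n := 1 - x with hy
  have hxy0 : ((d * (d - 1) : ℕ) : ZMod n) ≠ 0 := by
    rw [Ne, ZMod.natCast_eq_zero_iff]; exact hnd
  have hx0 : x ≠ 0 := by
    intro h
    rw [hxdef, ZMod.natCast_eq_zero_iff] at h
    exact hnd (h.mul_right _)
  have hyd : y = -((d - 1 : ℕ) : ZMod n) := by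
    rw [hy, hxdef, Nat.cast_sub hd1]; push_cast; ring
  have hy0' : ((d - 1 : ℕ) : ZMod n) ≠ 0 := by
    rw [Ne, ZMod.natCast_eq_zero_iff]
    intro h
    exact hnd (h.mul_left _)
  have hy0 : y ≠ 0 := by rw [hyd]; exact neg_ne_zero.mpr hy0'
  have hZDx : ZDStar x := zd_cast hn hp hpn hpd hx0
  have hZDy : ZDStar y := by rw [hyd]; exact zd_neg (zd_cast hn hq hqn hqd hy0')
  have hxne : x ≠ y := by
    intro h
    have h2 : x * ((n / p : ℕ) : ZMod n) = 0 := cast_mul_div_eq_zero hpn hpd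
    have h3 : y * ((n / p : ℕ) : ZMod n) = ((n / p : ℕ) : ZMod n) := by
      rw [hy, sub_mul, one_mul, h2, sub_zero]
    rw [← h, h2] at h3
    exact cast_div_ne_zero hn hp.one_lt hpn h3.symm
  obtain ⟨-, hadj⟩ := hcompl x y hZDx hZDy hxne
  rcases hadj with h | ⟨z, hz, hz0⟩
  · have hxyval : x * y = -(((d * (d - 1) : ℕ)) : ZMod n) := by
      rw [hyd, hxdef, Nat.cast_mul]; ring
    rw [hxyval, neg_eq_zero] at h
    exact hxy0 h
  · have h1 : x + y = 1 := by rw [hy]; ring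
    rw [h1, one_mul] at hz0
    exact hz hz0

lemma two_primes {n : ℕ} (hn : 1 < n) (hpp : ¬ IsPrimePow n) :
    ∃ p q, p.Prime ∧ q.Prime ∧ p ≠ q ∧ p ∣ n ∧ q ∣ n := by
  have hn0 : n ≠ 0 := by omega
  set p := n.minFac with hpdef
  have hp : p.Prime := Nat.minFac_prime (by omega)
  have hpn : p ∣ n := Nat.minFac_dvd n
  set m := n / p ^ n.factorization p with hm
  have hmdvd : m ∣ n := Nat.ordCompl_dvd n p
  have hm1 : m ≠ 1 := by
    intro h
    apply hpp
    refine ⟨p, n.factorization p, hp.prime, hp.factorization_pos_of_dvd hn0 hpn, ?_⟩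
    have h2 := Nat.ordProj_mul_ordCompl_eq_self n p
    rw [← hm, h, mul_one] at h2
    exact h2
  refine ⟨p, m.minFac, hp, Nat.minFac_prime hm1, ?_, hpn, (Nat.minFac_dvd m).trans hmdvd⟩
  intro h
  apply Nat.not_dvd_ordCompl hp hn0
  rw [← hm, h]
  exact Nat.minFac_dvd m

lemma casei {n p q r : ℕ} (hn : 1 < n) (hp : p.Prime) (hq : q.Prime) (hr : r.Prime)
    (hpq : p ≠ q) (hqr : q ≠ r) (hpr : p ≠ r) (hr2 : r ≠ 2)
    (hpn : p ∣ n) (hqn : q ∣ n) (hrn : r ∣ n) :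
    ¬ ∀ x y : ZMod n, ZDStar x → ZDStar y → x ≠ y → EAdj x y := by
  have hqr' : Nat.Coprime q r := (Nat.coprime_primes hq hr).mpr hqr
  obtain ⟨e, he1, he2⟩ := Nat.chineseRemainder hqr' 1 2
  have hpqr : Nat.Coprime p (q * r) :=
    ((Nat.coprime_primes hp hq).mpr hpq).mul_right ((Nat.coprime_primes hp hr).mpr hpr)
  obtain ⟨d, hd1, hd2⟩ := Nat.chineseRemainder hpqr 0 e
  have hdp : p ∣ d := Nat.modEq_zero_iff_dvd.mp hd1
  have hdq : d ≡ 1 [MOD q] := (hd2.of_dvd (dvd_mul_right q r)).trans he1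
  have hdr : d ≡ 2 [MOD r] := (hd2.of_dvd (dvd_mul_left r q)).trans he2
  have hge1 : 1 ≤ d := by
    by_contra hlt
    have hd0 : d = 0 := by omega
    rw [hd0] at hdq
    have h1 : 0 % q = 1 % q := hdq
    rw [Nat.zero_mod, Nat.mod_eq_of_lt hq.one_lt] at h1
    omega
  have hqd : q ∣ d - 1 := (Nat.modEq_iff_dvd' hge1).mp hdq.symm
  have hr3 : 2 < r := by
    have := hr.two_le
    omega
  have hrd : ¬ r ∣ d := by
    intro h
    have h0 : (0 : ℕ) ≡ 2 [MOD r] := (Nat.modEq_zero_iff_dvd.mpr h).symm.trans hdr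
    have h1 : r ∣ 2 := Nat.modEq_zero_iff_dvd.mp h0.symm
    have := Nat.le_of_dvd (by norm_num) h1
    omega
  have hrd1 : ¬ r ∣ (d - 1) := by
    intro h
    have h1 : (1 : ℕ) ≡ d [MOD r] := (Nat.modEq_iff_dvd' hge1).mpr h
    have h2 : (1 : ℕ) ≡ 2 [MOD r] := h1.trans hdr
    have h3 : r ∣ 2 - 1 := (Nat.modEq_iff_dvd' (by norm_num)).mp h2
    simp at h3
    exact hr.one_lt.ne' h3
  have hnd : ¬ n ∣ d * (d - 1) := by
    intro h
    rcases (Nat.Prime.dvd_mul hr).mp (hrn.trans h) with h | h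
    exacts [hrd h, hrd1 h]
  exact not_complete hn hp hq hpn hqn hdp hge1 hqd hnd

lemma caseii {n p q : ℕ} (hn : 1 < n) (hp : p.Prime) (hq : q.Prime) (hpq : p ≠ q)
    (hp2n : p ^ 2 ∣ n) (hqn : q ∣ n) :
    ¬ ∀ x y : ZMod n, ZDStar x → ZDStar y → x ≠ y → EAdj x y := by
  have hco : Nat.Coprime (p ^ 2) q := ((Nat.coprime_primes hp hq).mpr hpq).pow_left 2
  obtain ⟨d, hd1, hd2⟩ := Nat.chineseRemainder hco p 1
  have hp1 := hp.two_le
  have hpd : p ∣ d := by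
    have h1 : d ≡ p [MOD p] := hd1.of_dvd (dvd_pow_self p two_ne_zero)
    have h2 : d ≡ 0 [MOD p] := h1.trans (Nat.modEq_zero_iff_dvd.mpr dvd_rfl)
    exact Nat.modEq_zero_iff_dvd.mp h2
  have hge1 : 1 ≤ d := by
    by_contra hlt
    have hd0 : d = 0 := by omega
    rw [hd0] at hd2
    have h1 : 0 % q = 1 % q := hd2
    rw [Nat.zero_mod, Nat.mod_eq_of_lt hq.one_lt] at h1
    omega
  have hqd : q ∣ d - 1 := (Nat.modEq_iff_dvd' hge1).mp hd2.symm
  have hp2d : ¬ p ^ 2 ∣ d := by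
    intro h
    have h0 : (0 : ℕ) ≡ p [MOD p ^ 2] := (Nat.modEq_zero_iff_dvd.mpr h).symm.trans hd1
    have h1 : p ^ 2 ∣ p := Nat.modEq_zero_iff_dvd.mp h0.symm
    have h2 := Nat.le_of_dvd (by omega) h1
    nlinarith
  have hnd : ¬ n ∣ d * (d - 1) := by
    intro h
    have hpd1 : ¬ p ∣ (d - 1) := by
      intro h'
      have h1 : p ∣ d - (d - 1) := Nat.dvd_sub hpd h'
      have h2 : d - (d - 1) = 1 := by omega
      rw [h2, Nat.dvd_one] at h1
      omega
    have hco2 : Nat.Coprime (p ^ 2) (d - 1) := (hp.coprime_iff_not_dvd.mpr hpd1).pow_left 2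
    exact hp2d (hco2.dvd_of_dvd_mul_right (hp2n.trans h))
  exact not_complete hn hp hq (dvd_trans (dvd_pow_self p two_ne_zero) hp2n) hqn hpd hge1 hqd hnd

lemma dvd_val_of_zd_pp {p k : ℕ} (hp : p.Prime) (hn : 1 < p ^ k) {x : ZMod (p ^ k)}
    (hx : ZDStar x) : p ∣ x.val := by
  have : NeZero (p ^ k) := ⟨by omega⟩
  by_contra h
  have hc : Nat.Coprime (x.val) (p ^ k) :=
    (Nat.coprime_comm.mp (hp.coprime_iff_not_dvd.mpr h)).pow_right k
  have hu : IsUnit x := by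
    have hcast : ((x.val : ℕ) : ZMod (p ^ k)) = x := ZMod.natCast_rightInverse x
    rw [← hcast]
    exact (ZMod.isUnit_iff_coprime x.val (p ^ k)).mpr hc
  exact zd_not_unit hx hu

lemma dvd_val_of_zd_pq {p q : ℕ} (hp : p.Prime) (hq : q.Prime) (hn : 1 < p * q)
    {x : ZMod (p * q)} (hx : ZDStar x) : p ∣ x.val ∨ q ∣ x.val := by
  have : NeZero (p * q) := ⟨by omega⟩
  by_contra h
  push_neg at h
  have hc : Nat.Coprime (x.val) (p * q) :=
    Nat.Coprime.mul_right (Nat.coprime_comm.mp (hp.coprime_iff_not_dvd.mpr h.1))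
      (Nat.coprime_comm.mp (hq.coprime_iff_not_dvd.mpr h.2))
  have hu : IsUnit x := by
    have hcast : ((x.val : ℕ) : ZMod (p * q)) = x := ZMod.natCast_rightInverse x
    rw [← hcast]
    exact (ZMod.isUnit_iff_coprime x.val (p * q)).mpr hc
  exact zd_not_unit hx hu

theorem stmt8 (n : ℕ) (hn : 1 < n) (hcomp : ¬ n.Prime) :
    (∀ x y : ZMod n, ZDStar x → ZDStar y → x ≠ y → EAdj x y) ↔
    (IsPrimePow n ∨ ∃ p q : ℕ, p.Prime ∧ q.Prime ∧ p ≠ q ∧ n = p * q) := by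
  constructor
  · intro hcompl
    by_contra hnot
    push_neg at hnot
    obtain ⟨hpp, hnpq⟩ := hnot
    obtain ⟨p, q, hp, hq, hpq, hpn, hqn⟩ := two_primes hn hpp
    by_cases h3 : ∃ r, r.Prime ∧ r ∣ n ∧ r ≠ p ∧ r ≠ q
    · obtain ⟨r, hr, hrn, hrp, hrq⟩ := h3
      by_cases hr2 : r = 2
      · have hp2 : p ≠ 2 := fun h => hrp (hr2.trans h.symm)
        exact casei hn hr hq hp hrq (Ne.symm hpq) hrp hp2 hrn hqn hpn hcompl
      · exact casei hn hp hq hr hpq (Ne.symm hrq) (Ne.symm hrp) hr2 hpn hqn hrn hcompl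
    · push_neg at h3
      have hpqdvd : p * q ∣ n :=
        Nat.Coprime.mul_dvd_of_dvd_of_dvd ((Nat.coprime_primes hp hq).mpr hpq) hpn hqn
      obtain ⟨m, hm⟩ := hpqdvd
      have hm1 : m ≠ 1 := by
        intro h
        exact hnpq p q hp hq hpq (by rw [hm, h, mul_one])
      have hm0 : m ≠ 0 := by intro h; rw [hm, h, mul_zero] at hn; omega
      have hs : m.minFac.Prime := Nat.minFac_prime hm1
      have hsn : m.minFac ∣ n := (Nat.minFac_dvd m).trans ⟨p * q, by rw [hm]; ring⟩
      by_cases hsp : m.minFac = p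
      · obtain ⟨t, ht⟩ := hsp ▸ Nat.minFac_dvd m
        have hp2 : p ^ 2 ∣ n := ⟨q * t, by rw [hm, ht]; ring⟩
        exact caseii hn hp hq hpq hp2 hqn hcompl
      · have hsq : m.minFac = q := (h3 m.minFac hs hsn hsp)
        obtain ⟨t, ht⟩ := hsq ▸ Nat.minFac_dvd m
        have hq2 : q ^ 2 ∣ n := ⟨p * t, by rw [hm, ht]; ring⟩
        exact caseii hn hq hp (Ne.symm hpq) hq2 hpn hcompl
  · rintro (h | ⟨p, q, hp, hq, hpq, rfl⟩)
    · obtain ⟨p, k, hp', hk, rfl⟩ := h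
      have hp : p.Prime := Nat.prime_iff.mpr hp'
      have : NeZero (p ^ k) := ⟨by omega⟩
      intro x y hx hy hxy
      have hpdvd : p ∣ p ^ k := dvd_pow_self p (by omega)
      have hpx : p ∣ x.val := dvd_val_of_zd_pp hp hn hx
      have hpy : p ∣ y.val := dvd_val_of_zd_pp hp hn hy
      refine ⟨hxy, Or.inr ⟨((p ^ k / p : ℕ) : ZMod (p ^ k)),
        cast_div_ne_zero hn hp.one_lt hpdvd, ?_⟩⟩
      have hxc : ((x.val : ℕ) : ZMod (p ^ k)) = x := ZMod.natCast_rightInverse x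
      have hyc : ((y.val : ℕ) : ZMod (p ^ k)) = y := ZMod.natCast_rightInverse y
      calc (x + y) * ((p ^ k / p : ℕ) : ZMod (p ^ k))
          = ((x.val : ℕ) : ZMod (p ^ k)) * ((p ^ k / p : ℕ) : ZMod (p ^ k))
            + ((y.val : ℕ) : ZMod (p ^ k)) * ((p ^ k / p : ℕ) : ZMod (p ^ k)) := by
            rw [hxc, hyc]; ring
        _ = 0 := by
            rw [cast_mul_div_eq_zero hpdvd hpx, cast_mul_div_eq_zero hpdvd hpy, add_zero]
    · have : NeZero (p * q) := ⟨by omega⟩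
      intro x y hx hy hxy
      refine ⟨hxy, ?_⟩
      have hxc : ((x.val : ℕ) : ZMod (p * q)) = x := ZMod.natCast_rightInverse x
      have hyc : ((y.val : ℕ) : ZMod (p * q)) = y := ZMod.natCast_rightInverse y
      have hmix : ∀ {a b : ZMod (p * q)}, p ∣ a.val → q ∣ b.val → a * b = 0 := by
        intro a b ha hb
        have hac : ((a.val : ℕ) : ZMod (p * q)) = a := ZMod.natCast_rightInverse a
        have hbc : ((b.val : ℕ) : ZMod (p * q)) = b := ZMod.natCast_rightInverse b
        have hdvd : p * q ∣ a.val * b.val :=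
          Nat.Coprime.mul_dvd_of_dvd_of_dvd ((Nat.coprime_primes hp hq).mpr hpq)
            (ha.mul_right _) (hb.mul_left _)
        calc a * b = ((a.val * b.val : ℕ) : ZMod (p * q)) := by rw [Nat.cast_mul, hac, hbc]
          _ = 0 := (ZMod.natCast_eq_zero_iff _ _).mpr hdvd
      have hsame : ∀ {r : ℕ}, r.Prime → r ∣ p * q → r ∣ x.val → r ∣ y.val →
          ∃ z ≠ (0 : ZMod (p * q)), (x + y) * z = 0 := by
        intro r hr hrn hrx hry
        refine ⟨((p * q / r : ℕ) : ZMod (p * q)), cast_div_ne_zero hn hr.one_lt hrn, ?_⟩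
        calc (x + y) * ((p * q / r : ℕ) : ZMod (p * q))
            = ((x.val : ℕ) : ZMod (p * q)) * ((p * q / r : ℕ) : ZMod (p * q))
              + ((y.val : ℕ) : ZMod (p * q)) * ((p * q / r : ℕ) : ZMod (p * q)) := by
              rw [hxc, hyc]; ring
          _ = 0 := by
              rw [cast_mul_div_eq_zero hrn hrx, cast_mul_div_eq_zero hrn hry, add_zero]
      rcases dvd_val_of_zd_pq hp hq hn hx with hx' | hx' <;>
        rcases dvd_val_of_zd_pq hp hq hn hy with hy' | hy'
      · exact Or.inr (hsame hp (dvd_mul_right p q) hx' hy')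
      · exact Or.inl (hmix hx' hy')
      · exact Or.inl ((mul_comm x y).trans (hmix hy' hx'))
      · exact Or.inr (hsame hq (dvd_mul_left q p) hx' hy')
end

section
/- If R is a finite commutative ring that is not a field, then the extended zero-divisor graph Γ̃(R) has a vertex adjacent to every other vertex: there exists a ∈ Z(R)* such that for all x ∈ Z(R)* with x ≠ a, either ax = 0 or a + x ∈ Z(R). -/
/-! In an Artinian ring some nonzero zero-divisor `a` has a prime, hence maximal, annihilator
`P` (an associated prime of `R`). Every other maximal ideal `M` misses some `s ∈ P`, and
`s * a = 0 ∈ M` forces `a ∈ M`. So if `x` is a zero-divisor with `a * x ≠ 0`, then `x ∉ P`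
lies in a maximal ideal `M ≠ P`, which also contains `a`; thus `a + x` is a non-unit, hence a
zero-divisor. -/

open Submodule

theorem ZDStar.not_isUnit {R : Type*} [CommRing R] {x : R} (hx : ZDStar x) : ¬IsUnit x := by
  obtain ⟨-, y, hy0, hxy⟩ := hx
  exact fun hu ↦ hy0 (hu.mul_right_eq_zero.mp hxy)

theorem exists_ne_zero_mul_eq_zero_of_not_isUnit {R : Type*} [CommRing R] [IsArtinianRing R]
    {w : R} (hw : ¬IsUnit w) : ∃ z ≠ 0, w * z = 0 := by
  rw [IsArtinianRing.isUnit_iff_mem_nonZeroDivisors, notMem_nonZeroDivisors_iff_left] at hw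
  obtain ⟨z, hwz, hz0⟩ := hw
  exact ⟨z, hz0, hwz⟩

theorem mem_colon_bot_singleton_iff {R : Type*} [CommRing R] {a r : R} :
    r ∈ (⊥ : Ideal R).colon {a} ↔ r * a = 0 := by
  rw [mem_colon_singleton, mem_bot, smul_eq_mul]

theorem exists_zdStar_isMaximal_colon {R : Type*} [CommRing R] [Nontrivial R] [IsArtinianRing R]
    (hR : ¬IsField R) : ∃ a : R, ZDStar a ∧ ((⊥ : Ideal R).colon {a}).IsMaximal := by
  obtain ⟨b, hb0, hbu⟩ := Ring.exists_not_isUnit_of_not_isField hR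
  obtain ⟨c, hc0, hbc⟩ := exists_ne_zero_mul_eq_zero_of_not_isUnit hbu
  obtain ⟨P, hP, hcP⟩ := exists_le_isAssociatedPrime_of_isNoetherianRing R c hc0
  obtain ⟨hPprime, a, rfl⟩ := isAssociatedPrime_iff.mp hP
  have hba : b * a = 0 := mem_colon_bot_singleton_iff.mp (hcP (mem_colon_bot_singleton_iff.mpr hbc))
  refine ⟨a, ⟨?_, b, hb0, by rw [mul_comm, hba]⟩, IsArtinianRing.isMaximal_of_isPrime _⟩
  rintro rfl
  exact hPprime.ne_top ((Ideal.eq_top_iff_one _).mpr (mem_colon_bot_singleton_iff.mpr (mul_zero 1)))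

theorem mem_of_isMaximal_ne_colon {R : Type*} [CommRing R] {a : R}
    (hP : ((⊥ : Ideal R).colon {a}).IsMaximal) {M : Ideal R} (hM : M.IsMaximal)
    (hne : M ≠ (⊥ : Ideal R).colon {a}) : a ∈ M := by
  obtain ⟨s, hsP, hsM⟩ : ∃ s ∈ (⊥ : Ideal R).colon {a}, s ∉ M :=
    SetLike.not_le_iff_exists.mp fun hle ↦ hne (hP.eq_of_le hM.ne_top hle).symm
  have hsa : s * a ∈ M := by rw [mem_colon_bot_singleton_iff.mp hsP]; exact M.zero_mem
  exact (hM.isPrime.mem_or_mem hsa).resolve_left hsM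

theorem not_isUnit_add_of_isMaximal_colon {R : Type*} [CommRing R] {a x : R}
    (hP : ((⊥ : Ideal R).colon {a}).IsMaximal) (hx : ¬IsUnit x) (hax : a * x ≠ 0) :
    ¬IsUnit (a + x) := by
  obtain ⟨M, hM, hxM⟩ := Ideal.exists_le_maximal _ (Ideal.span_singleton_ne_top hx)
  have hxM : x ∈ M := hxM (Ideal.mem_span_singleton_self x)
  have hne : M ≠ (⊥ : Ideal R).colon {a} := by
    rintro rfl
    exact hax (by rw [mul_comm]; exact mem_colon_bot_singleton_iff.mp hxM)
  have haxM : a + x ∈ M := M.add_mem (mem_of_isMaximal_ne_colon hP hM hne) hxM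
  exact fun hu ↦ hM.ne_top (M.eq_top_of_isUnit_mem haxM hu)

theorem stmt11 {R : Type*} [CommRing R] [Nontrivial R] [Finite R] (hR : ¬ IsField R) :
    ∃ a : R, ZDStar a ∧ ∀ x : R, ZDStar x → x ≠ a →
      (a * x = 0 ∨ ∃ z ≠ 0, (a + x) * z = 0) := by
  obtain ⟨a, ha, hP⟩ := exists_zdStar_isMaximal_colon hR
  refine ⟨a, ha, fun x hx _ ↦ or_iff_not_imp_left.mpr fun hax ↦ ?_⟩
  exact exists_ne_zero_mul_eq_zero_of_not_isUnit
    (not_isUnit_add_of_isMaximal_colon hP hx.not_isUnit hax)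
end

section
/- If |Z(R)*| ≥ 3, then every vertex of Γ̃(R) lies on a triangle: for each x ∈ Z(R)*, there exist distinct y, z ∈ Z(R)* \ {x} such that x–y, y–z, and z–x are all edges of Γ̃(R). -/
/-- If `x` has two distinct annihilating elements different from `x`, we get a triangle. -/
lemma triA {R : Type*} [CommRing R] {x u v : R} (hx0 : x ≠ 0) (hu0 : u ≠ 0) (hv0 : v ≠ 0)
    (hux : u ≠ x) (hvx : v ≠ x) (huv : u ≠ v) (hxu : x * u = 0) (hxv : x * v = 0) :
    ∃ y z : R, ZDStar y ∧ ZDStar z ∧ y ≠ x ∧ z ≠ x ∧ y ≠ z ∧ EAdj x y ∧ EAdj y z ∧ EAdj z x := by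
  refine ⟨u, v, ⟨hu0, x, hx0, by linear_combination hxu⟩, ⟨hv0, x, hx0, by linear_combination hxv⟩,
    hux, hvx, huv, ⟨fun h => hux h.symm, Or.inl hxu⟩,
    ⟨huv, Or.inr ⟨x, hx0, by linear_combination hxu + hxv⟩⟩,
    ⟨hvx, Or.inl (by linear_combination hxv)⟩⟩

/-- Pigeonhole: among three pairwise distinct elements, one avoids both `x` and `y`. -/
lemma pick3 {R : Type*} [CommRing R] {a b c x y : R} (hab : a ≠ b) (hac : a ≠ c) (hbc : b ≠ c)
    (pa : ZDStar a) (pb : ZDStar b) (pc : ZDStar c) :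
    ∃ p : R, ZDStar p ∧ p ≠ x ∧ p ≠ y := by
  by_cases hax : a = x
  · by_cases hby : b = y
    · exact ⟨c, pc, fun h => hac (hax.trans h.symm), fun h => hbc (hby.trans h.symm)⟩
    · exact ⟨b, pb, fun h => hab (hax.trans h.symm), hby⟩
  · by_cases hay : a = y
    · by_cases hbx : b = x
      · exact ⟨c, pc, fun h => hbc (hbx.trans h.symm), fun h => hac (hay.trans h.symm)⟩
      · exact ⟨b, pb, hbx, fun h => hab (hay.trans h.symm)⟩
    · exact ⟨a, pa, hax, hay⟩

/-- The case `x² = 0`, `3x = 0`, with `c` satisfying `x*c = x`. -/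
lemma triC0 {R : Type*} [CommRing R] {x c d : R} (hx0 : x ≠ 0) (h3x : 3 * x = 0)
    (hxx : x * x = 0) (h2x : 2 * x ≠ 0)
    (hcx : c ≠ x) (hc2 : c ≠ 2 * x) (hxc : x * c = x)
    (hd0 : d ≠ 0) (hcd : c * d = 0)
    (hxd : x * d = 0 ∨ x * d = x ∨ x * d = 2 * x) :
    ∃ y z : R, ZDStar y ∧ ZDStar z ∧ y ≠ x ∧ z ≠ x ∧ y ≠ z ∧ EAdj x y ∧ EAdj y z ∧ EAdj z x := by
  have hc0 : c ≠ 0 := by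
    intro h
    apply hx0
    rw [h, mul_zero] at hxc
    exact hxc.symm
  have hne1 : x + d ≠ 0 := by
    intro he
    apply hx0
    linear_combination c * he - hcd - hxc
  have hne2 : 2 * x + d ≠ 0 := by
    intro he
    apply h2x
    linear_combination c * he - hcd - 2 * hxc
  refine ⟨2 * x, c, ⟨h2x, x, hx0, by linear_combination 2 * hxx⟩, ⟨hc0, d, hd0, hcd⟩,
    fun h => hx0 (by linear_combination h), hcx, fun h => hc2 h.symm,
    ⟨fun h => hx0 (by linear_combination -h), Or.inr ⟨x, hx0, by linear_combination 3 * hxx⟩⟩,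
    ⟨fun h => hc2 h.symm, Or.inr ?_⟩, ⟨hcx, Or.inr ?_⟩⟩
  · rcases hxd with h | h | h
    · exact ⟨d, hd0, by linear_combination 2 * h + hcd⟩
    · exact ⟨x + d, hne1, by linear_combination 2 * hxx + 2 * h + hxc + hcd + h3x⟩
    · exact ⟨2 * x + d, hne2, by linear_combination 4 * hxx + 2 * h + 2 * hxc + hcd + 2 * h3x⟩
  · rcases hxd with h | h | h
    · exact ⟨d, hd0, by linear_combination hcd + h⟩
    · exact ⟨2 * x + d, hne2, by linear_combination 2 * hxc + hcd + 2 * hxx + h + h3x⟩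
    · exact ⟨x + d, hne1, by linear_combination hxc + hcd + hxx + h + h3x⟩

theorem stmt12 {R : Type*} [CommRing R] [Nontrivial R]
    (h3 : ∃ a b c : R, ZDStar a ∧ ZDStar b ∧ ZDStar c ∧ a ≠ b ∧ a ≠ c ∧ b ≠ c) :
    ∀ x : R, ZDStar x → ∃ y z : R, ZDStar y ∧ ZDStar z ∧
      y ≠ x ∧ z ≠ x ∧ y ≠ z ∧ EAdj x y ∧ EAdj y z ∧ EAdj z x := by
  obtain ⟨a, b, c, pa, pb, pc, hab, hac, hbc⟩ := h3
  rintro x ⟨hx0, w, hw0, hxw⟩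
  by_cases hA : ∃ u v : R, u ≠ v ∧ u ≠ 0 ∧ v ≠ 0 ∧ u ≠ x ∧ v ≠ x ∧ x * u = 0 ∧ x * v = 0
  · obtain ⟨u, v, huv, hu0, hv0, hux, hvx, hxu, hxv⟩ := hA
    exact triA hx0 hu0 hv0 hux hvx huv hxu hxv
  by_cases hB : ∀ z : R, x * z = 0 → z = 0 ∨ z = x
  · -- Case B: the only nonzero annihilator of x is x itself; derive a contradiction
    exfalso
    have hxx : x * x = 0 := by
      rcases hB w hxw with h | h
      · exact absurd h hw0
      · rw [h] at hxw; exact hxw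
    obtain ⟨e, pe, hex⟩ : ∃ e, ZDStar e ∧ e ≠ x := by
      by_cases h : a = x
      · exact ⟨b, pb, fun h' => hab (h.trans h'.symm)⟩
      · exact ⟨a, pa, h⟩
    obtain ⟨he0, d, hd0, hed⟩ := pe
    have hxe : x * e = x := by
      rcases hB (x * e) (by linear_combination e * hxx) with h | h
      · rcases hB e h with h' | h'
        · exact absurd h' he0
        · exact absurd h' hex
      · exact h
    have hxd : x * d = x := by
      rcases hB (x * d) (by linear_combination d * hxx) with h | h
      · rcases hB d h with h' | h'
        · exact absurd h' hd0
        · exact absurd (by linear_combination hed - hxe - e * h' : x = (0:R)) hx0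
      · exact h
    exact hx0 (by linear_combination x * hed - hxd - d * hxe)
  push_neg at hB
  obtain ⟨w', hxw', hw'0, hw'x⟩ : ∃ w' : R, x * w' = 0 ∧ w' ≠ 0 ∧ w' ≠ x := by
    obtain ⟨z, hz1, hz2, hz3⟩ := hB
    exact ⟨z, hz1, hz2, hz3⟩
  -- Property P: the nonzero annihilators of x are exactly among {x, w'}
  have hP : ∀ z : R, x * z = 0 → z = 0 ∨ z = x ∨ z = w' := by
    intro z hz
    by_contra h
    push_neg at h
    obtain ⟨hz0, hzx, hzw⟩ := h
    exact hA ⟨z, w', hzw, hz0, hw'0, hzx, hw'x, hz, hxw'⟩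
  by_cases hC0 : x + w' = 0
  · -- Case C0: w' = -x, hence x² = 0 and 3x = 0
    have hxx : x * x = 0 := by linear_combination x * hC0 - hxw'
    have h3x : 3 * x = 0 := by
      rcases hP (2 * x) (by linear_combination 2 * hxx) with h | h | h
      · exact absurd (by linear_combination hC0 - h : w' = x) hw'x
      · exact absurd (by linear_combination h : x = (0:R)) hx0
      · linear_combination h + hC0
    have hw'2x : w' = 2 * x := by linear_combination hC0 - h3x
    have h2xne : 2 * x ≠ 0 := fun h => hw'x (by linear_combination hC0 - h)
    obtain ⟨p, pp, hpx, hp2x⟩ := pick3 (x := x) (y := 2 * x) hab hac hbc pa pb pc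
    obtain ⟨hp0, d, hd0, hpd⟩ := pp
    have hxp : x * p = x ∨ x * p = 2 * x := by
      rcases hP (x * p) (by linear_combination p * hxx) with h | h | h
      · rcases hP p h with h' | h' | h'
        · exact absurd h' hp0
        · exact absurd h' hpx
        · exact absurd (h'.trans hw'2x) hp2x
      · exact Or.inl h
      · exact Or.inr (h.trans hw'2x)
    have hxd : x * d = 0 ∨ x * d = x ∨ x * d = 2 * x := by
      have h := hP (x * d) (by linear_combination d * hxx)
      rwa [hw'2x] at h
    rcases hxp with hxp | hxp
    · exact triC0 hx0 h3x hxx h2xne hpx hp2x hxp hd0 hpd hxd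
    · have h1 : x * (2 * p) = x := by linear_combination 2 * hxp + h3x
      have hp'x : 2 * p ≠ x := fun he => hx0 (by linear_combination hxx - h1 + x * he)
      have hp'2x : 2 * p ≠ 2 * x := fun he => hx0 (by linear_combination 2 * hxx - h1 + x * he)
      have hp'd : (2 * p) * d = 0 := by linear_combination 2 * hpd
      exact triC0 hx0 h3x hxx h2xne hp'x hp'2x h1 hd0 hp'd hxd
  · -- Case C1: x + w' ≠ 0
    have hxx : x * x ≠ 0 := by
      intro h
      rcases hP (x + w') (by linear_combination h + hxw') with h' | h' | h'
      · exact hC0 h'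
      · exact hw'0 (by linear_combination h')
      · exact hx0 (by linear_combination h')
    have hww : w' * w' = 0 ∨ w' * w' = w' := by
      rcases hP (w' * w') (by linear_combination w' * hxw') with h | h | h
      · exact Or.inl h
      · exact absurd (by linear_combination w' * hxw' - x * h : x * x = (0:R)) hxx
      · exact Or.inr h
    rcases hww with hww | hww
    · -- C1a: w'² = 0, triangle (x, w', x + w')
      refine ⟨w', x + w', ⟨hw'0, x, hx0, by linear_combination hxw'⟩,
        ⟨hC0, w', hw'0, by linear_combination hxw' + hww⟩,
        hw'x, fun he => hw'0 (by linear_combination he), fun he => hx0 (by linear_combination -he),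
        ⟨fun he => hw'x he.symm, Or.inl hxw'⟩,
        ⟨fun he => hx0 (by linear_combination -he), Or.inl (by linear_combination hxw' + hww)⟩,
        ⟨fun he => hw'0 (by linear_combination he), Or.inr ⟨w', hw'0, by linear_combination 2 * hxw' + hww⟩⟩⟩
    · -- C1b: w'² = w' (idempotent)
      by_cases hc : ∃ e : R, e * w' = 0 ∧ e ≠ 0 ∧ e ≠ x
      · obtain ⟨e, hew, he0, hex⟩ := hc
        have hw'e : w' ≠ e := fun he => hw'0 (by linear_combination w' * he + hew - hww)
        exact ⟨w', e, ⟨hw'0, x, hx0, by linear_combination hxw'⟩, ⟨he0, w', hw'0, hew⟩,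
          hw'x, hex, hw'e,
          ⟨fun h => hw'x h.symm, Or.inl hxw'⟩,
          ⟨hw'e, Or.inl (by linear_combination hew)⟩,
          ⟨hex, Or.inr ⟨w', hw'0, by linear_combination hew + hxw'⟩⟩⟩
      · exfalso
        push_neg at hc
        have h1w : (1 : R) - w' ≠ 0 := by
          intro h
          exact hx0 (by linear_combination hxw' + x * h)
        have hx1w : (1 : R) - w' = x := hc (1 - w') (by linear_combination -hww) h1w
        have hall : ∀ r : R, ZDStar r → r = x ∨ r = w' := by
          rintro r ⟨hr0, d, hd0, hrd⟩
          have hrw : r * w' = 0 ∨ r * w' = w' := by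
            rcases hP (r * w') (by linear_combination r * hxw') with h | h | h
            · exact Or.inl h
            · exact absurd (by linear_combination w' * h - h - r * hww + hxw' : x = (0:R)) hx0
            · exact Or.inr h
          have hrx : r * x = 0 ∨ r * x = x := by
            by_cases hz : r * x = 0
            · exact Or.inl hz
            · exact Or.inr (hc (r * x) (by linear_combination r * hxw') hz)
          rcases hrw with h1 | h1 <;> rcases hrx with h2 | h2
          · exact absurd (by linear_combination h1 + h2 + r * hx1w : r = (0:R)) hr0
          · exact Or.inl (by linear_combination h1 + h2 + r * hx1w)
          · exact Or.inr (by linear_combination h1 + h2 + r * hx1w)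
          · exact absurd (by linear_combination hrd - d * h1 - d * h2 - d * r * hx1w + d * hx1w : d = (0:R)) hd0
        rcases hall a pa with h | h <;> rcases hall b pb with h' | h' <;>
          rcases hall c pc with h'' | h'' <;> simp_all
end

section
/- If x and y are distinct non-adjacent vertices of Γ̃(R) (i.e., xy ≠ 0 and x + y ∉ Z(R)), then there exist z, t ∈ Z(R)* such that x, y, z, t are pairwise distinct and x–z, z–y, y–t, t–x are all edges of Γ̃(R) (a 4-cycle through x and y). -/
private lemma pick_ann {R : Type*} [CommRing R] (x y a b : R) (hx0 : x ≠ 0)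
    (ha0 : a ≠ 0) (hxa : x * a = 0) (hb0 : b ≠ 0) (hyb : y * b = 0) :
    ∃ c, c ≠ 0 ∧ x * c = 0 ∧ y * c ≠ x := by
  by_cases h1 : y * a = x
  · by_cases h2 : y * x = x
    · refine ⟨b, hb0, ?_, ?_⟩
      · linear_combination x * hyb - b * h2
      · rw [hyb]; exact fun h => hx0 h.symm
    · exact ⟨x, hx0, by linear_combination y * hxa - x * h1, h2⟩
  · exact ⟨a, ha0, hxa, h1⟩

theorem stmt13 {R : Type*} [CommRing R] [Nontrivial R] (x y : R)
    (hx : ZDStar x) (hy : ZDStar y) (hxy : x ≠ y)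
    (hmul : x * y ≠ 0) (hadd : ¬ ∃ z ≠ 0, (x + y) * z = 0) :
    ∃ z t : R, ZDStar z ∧ ZDStar t ∧
      z ≠ x ∧ z ≠ y ∧ t ≠ x ∧ t ≠ y ∧ z ≠ t ∧
      EAdj x z ∧ EAdj z y ∧ EAdj y t ∧ EAdj t x := by
  obtain ⟨hx0, a0, ha00, hxa0⟩ := hx
  obtain ⟨hy0, b0, hb00, hyb0⟩ := hy
  obtain ⟨a, ha0, hxa, hya⟩ := pick_ann x y a0 b0 hx0 ha00 hxa0 hb00 hyb0
  obtain ⟨b, hb0, hyb, hxb⟩ := pick_ann y x b0 a0 hy0 hb00 hyb0 ha00 hxa0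
  have hxz : x * (y * a) = 0 := by linear_combination y * hxa
  have hyt : y * (x * b) = 0 := by linear_combination x * hyb
  have hz0 : y * a ≠ 0 := fun h =>
    hadd ⟨a, ha0, by linear_combination hxa + h⟩
  have ht0 : x * b ≠ 0 := fun h =>
    hadd ⟨b, hb0, by linear_combination hyb + h⟩
  have hzy : y * a ≠ y := fun h => hmul (by linear_combination hxz - x * h)
  have htx : x * b ≠ x := fun h => hmul (by linear_combination hyt - y * h)
  have hzt : y * a ≠ x * b := by
    intro h
    exact hadd ⟨y * a, hz0, by linear_combination hxz + hyt + y * h⟩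
  refine ⟨y * a, x * b,
    ⟨hz0, x, hx0, by linear_combination hxz⟩,
    ⟨ht0, y, hy0, by linear_combination hyt⟩,
    hya, hzy, htx, hxb, hzt, ?_, ?_, ?_, ?_⟩
  · exact ⟨fun h => hya h.symm, Or.inl hxz⟩
  · exact ⟨hzy, Or.inr ⟨b, hb0, by linear_combination (a + 1) * hyb⟩⟩
  · exact ⟨fun h => hxb h.symm, Or.inl hyt⟩
  · exact ⟨htx, Or.inr ⟨a, ha0, by linear_combination (b + 1) * hxa⟩⟩
end

section
/- If R is a finite commutative ring and the zero-divisor graph Γ(R) equals the extended zero-divisor graph Γ̃(R) (i.e., for all distinct x, y ∈ Z(R)*, x + y ∈ Z(R) implies xy = 0), then Γ(R) is a complete graph (xy = 0 for all distinct x, y ∈ Z(R)*). -/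
theorem stmt17 {R : Type*} [CommRing R] [Nontrivial R] [Finite R]
    (h : ∀ x y : R, ZDStar x → ZDStar y → x ≠ y →
      (∃ z ≠ 0, (x + y) * z = 0) → x * y = 0) :
    ∀ x y : R, ZDStar x → ZDStar y → x ≠ y → x * y = 0 := by
  intro x y hx hy hxy
  by_cases hc : ∃ z ≠ 0, (x + y) * z = 0
  · exact h x y hx hy hxy hc
  · by_contra hne
    obtain ⟨hx0, a, ha0, hxa⟩ := hx
    obtain ⟨hy0, b, hb0, hyb⟩ := hy
    have hxyZ : ZDStar (x * y) := ⟨hne, a, ha0, by linear_combination y * hxa⟩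
    have claim1 : x * (x * y) = 0 ∨ x * y = x := by
      by_cases hxx : x = x * y
      · exact Or.inr hxx.symm
      · exact Or.inl (h x (x * y) ⟨hx0, a, ha0, hxa⟩ hxyZ hxx
          ⟨a, ha0, by linear_combination (1 + y) * hxa⟩)
    have claim2 : y * (x * y) = 0 ∨ x * y = y := by
      by_cases hyy : y = x * y
      · exact Or.inr hyy.symm
      · exact Or.inl (h y (x * y) ⟨hy0, b, hb0, hyb⟩ hxyZ hyy
          ⟨b, hb0, by linear_combination (1 + x) * hyb⟩)
    rcases claim1 with e1 | e1
    · rcases claim2 with e2 | e2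
      · exact hc ⟨x * y, hne, by linear_combination e1 + e2⟩
      · -- x * y = y : then x * (x*y) = x*y = y ≠ 0, but e1 says it's 0
        exact hy0 (by calc y = x * (x * y) := by linear_combination (-x - 1) * e2
                        _ = 0 := e1)
    · rcases claim2 with e2 | e2
      · -- x * y = x : then y * (x*y) = y * x = x*y = x ≠ 0
        exact hx0 (by calc x = y * (x * y) := by linear_combination (-y - 1) * e1
                        _ = 0 := e2)
      · exact hxy (e1.symm.trans e2)
end

section
/- Let n > 1 be a composite integer. Then Γ(ℤ/nℤ) = Γ̃(ℤ/nℤ) (i.e., for all distinct nonzero zero-divisors x, y with x + y a zero-divisor, one has xy = 0) if and only if n = p² for some prime p. -/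
lemma prime_dvd_val_of_zdstar {p : ℕ} (hp : p.Prime) (w : ZMod (p ^ 2))
    (hw : ZDStar w) : p ∣ (ZMod.val w) := by
  haveI : NeZero (p ^ 2) := ⟨(pow_pos hp.pos 2).ne'⟩
  obtain ⟨hw0, z, hz0, hwz⟩ := hw
  have hnu : ¬ IsUnit w := by
    intro hu
    exact hz0 ((hu.mul_right_eq_zero).mp hwz)
  have hnc : ¬ Nat.Coprime (ZMod.val w) (p ^ 2) := by
    intro hc
    apply hnu
    have : ((ZMod.val w : ℕ) : ZMod (p ^ 2)) = w := by
      simp [ZMod.natCast_val, ZMod.cast_id]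
    rw [← this]
    exact (ZMod.isUnit_iff_coprime _ _).mpr hc
  by_contra hnd
  exact hnc (((hp.coprime_iff_not_dvd.mpr hnd).symm).pow_right 2)

theorem stmt18 (n : ℕ) (hn : 1 < n) (hcomp : ¬ n.Prime) :
    (∀ x y : ZMod n, ZDStar x → ZDStar y → x ≠ y →
      (∃ z ≠ 0, (x + y) * z = 0) → x * y = 0) ↔
    ∃ p : ℕ, p.Prime ∧ n = p ^ 2 := by
  haveI : NeZero n := ⟨by omega⟩
  haveI : Fact (1 < n) := ⟨hn⟩
  constructor
  · intro h
    set p := n.minFac with hpdef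
    have hpp : p.Prime := Nat.minFac_prime (by omega)
    have hpd : p ∣ n := n.minFac_dvd
    have hp2 : 2 ≤ p := hpp.two_le
    have hsq : p ^ 2 ≤ n := Nat.minFac_sq_le_self (by omega) hcomp
    have hpltn : p < n := lt_of_lt_of_le (by nlinarith) hsq
    by_cases h2 : n ∣ 2 * p
    · -- then n = 4 and p = 2
      obtain ⟨k, hk⟩ := hpd
      have hk2 : k ∣ 2 := by
        have : p * k ∣ p * 2 := by rw [← hk, mul_comm p 2]; exact h2
        exact (mul_dvd_mul_iff_left (by omega : p ≠ 0)).mp this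
      have hkle : k ≤ 2 := Nat.le_of_dvd two_pos hk2
      have hkpos : 0 < k := by
        rcases Nat.eq_zero_or_pos k with h0 | h0
        · subst h0; rw [mul_zero] at hk; omega
        · exact h0
      interval_cases k
      · rw [mul_one] at hk
        exact absurd (hk ▸ hpp) hcomp
      · -- n = 2p, so 2 ∣ n, so p = minFac n ≤ 2, so p = 2, n = 4
        have h2d : 2 ∣ n := ⟨p, by omega⟩
        have : p ≤ 2 := Nat.minFac_le_of_dvd (le_refl 2) h2d
        have hp2' : p = 2 := le_antisymm this hp2
        exact ⟨2, Nat.prime_two, by omega⟩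
    · -- use x = p, y = -p
      have hcast : ∀ m : ℕ, ((m : ℕ) : ZMod n) = 0 ↔ n ∣ m := fun m =>
        ZMod.natCast_eq_zero_iff m n
      have hx0 : ((p : ℕ) : ZMod n) ≠ 0 := by
        rw [Ne, hcast]
        intro hd
        exact absurd (Nat.le_of_dvd (by omega) hd) (by omega)
      have hq0 : (((n / p : ℕ)) : ZMod n) ≠ 0 := by
        rw [Ne, hcast]
        intro hd
        have h1 : 0 < n / p := Nat.div_pos (le_of_lt hpltn) (by omega)
        have h2' : n / p < n := Nat.div_lt_self (by omega) (by omega)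
        exact absurd (Nat.le_of_dvd h1 hd) (by omega)
      have hmul : ((p : ℕ) : ZMod n) * ((n / p : ℕ) : ZMod n) = 0 := by
        rw [← Nat.cast_mul, Nat.mul_div_cancel' n.minFac_dvd]
        exact ZMod.natCast_self n
      have hxz : ZDStar ((p : ℕ) : ZMod n) := ⟨hx0, _, hq0, hmul⟩
      have hyz : ZDStar (-((p : ℕ) : ZMod n)) :=
        ⟨neg_ne_zero.mpr hx0, _, hq0, by rw [neg_mul, hmul, neg_zero]⟩
      have hne : ((p : ℕ) : ZMod n) ≠ -((p : ℕ) : ZMod n) := by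
        intro he
        apply h2
        rw [← hcast]
        have : ((p : ℕ) : ZMod n) + ((p : ℕ) : ZMod n) = 0 := by
          nth_rewrite 2 [he]; ring
        push_cast
        rw [two_mul]
        exact_mod_cast this
      have hsum : ∃ z : ZMod n, z ≠ 0 ∧ (((p : ℕ) : ZMod n) + -((p : ℕ) : ZMod n)) * z = 0 :=
        ⟨1, one_ne_zero, by ring⟩
      have hres := h _ _ hxz hyz hne hsum
      have hdvd : n ∣ p ^ 2 := by
        rw [← hcast]
        push_cast
        have : ((p : ℕ) : ZMod n) * -((p : ℕ) : ZMod n) = 0 := hres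
        have h' : ((p : ℕ) : ZMod n) * ((p : ℕ) : ZMod n) = 0 := by
          have := congrArg Neg.neg this
          simpa using this
        rw [sq]; exact h'
      obtain ⟨k, hkle, hkeq⟩ := (Nat.dvd_prime_pow hpp).mp hdvd
      interval_cases k
      · rw [pow_zero] at hkeq; omega
      · rw [pow_one] at hkeq
        exact absurd (hkeq ▸ hpp) hcomp
      · exact ⟨p, hpp, hkeq⟩
  · rintro ⟨p, hpp, rfl⟩
    intro x y hx hy _ _
    have hxv := prime_dvd_val_of_zdstar hpp x hx
    have hyv := prime_dvd_val_of_zdstar hpp y hy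
    have hx' : ((ZMod.val x : ℕ) : ZMod (p ^ 2)) = x := by
      simp [ZMod.natCast_val, ZMod.cast_id]
    have hy' : ((ZMod.val y : ℕ) : ZMod (p ^ 2)) = y := by
      simp [ZMod.natCast_val, ZMod.cast_id]
    have hd : p ^ 2 ∣ ZMod.val x * ZMod.val y := by
      exact Dvd.dvd.trans (dvd_of_eq (sq p)) (mul_dvd_mul hxv hyv)
    rw [← hx', ← hy', ← Nat.cast_mul,
      ZMod.natCast_eq_zero_iff]
    exact hd
end
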